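/- (Theorem 3, quadratic convergence of exact DPO-Mix-R.) Suppose θ^(0) = 0 and the parameters evolve by the exact DPO-Mix-R update with learning rate η = 1/(β²A): θ^(t+1)_a = θ^(t)_a + (1/(βA)) Σ_{a'∈𝒴} Δ(a,a';θ^(t)) / σ'(r(a) − r(a')) for every a ∈ 𝒴. Then for every number of iterations T ∈ ℕ and all a, a' ∈ 𝒴, |δ(a,a';θ^(T))| ≤ 0.5^(2^T − 1). -/

import Mathlib

/-!
For a pair `(a, a')` write `x = r a - r a'` and `d = δ(a, a'; θ)`. The update adds to `β θ_a` the
average over `a'` of the Newton-type increments `(σ(x) - σ(x - d)) / σ'(x)`. Since `σ'` is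
`31/320`-Lipschitz and `σ' ≥ 31/160` on `[-1, 1]`, where `x` lies, each increment is within `d²/4`
of `d`. As `δ(a, c) - δ(a', c) = δ(a, a')`, the new gap is an average of differences of two such
errors, so `|δ| ≤ M` becomes `|δ| ≤ M²/2`; starting from `M₀ = 1` this gives `M_T = 2^(1 - 2^T)`.
-/

/-- The sigmoid function. -/
noncomputable def sig (x : ℝ) : ℝ := 1 / (1 + Real.exp (-x))

/-- The derivative of the sigmoid function. -/
noncomputable def sig' (x : ℝ) : ℝ := sig x * (1 - sig x)

open Real Finset NNReal

theorem abs_sub_sub_mul_sub_le_of_lipschitzWith_deriv {f f' : ℝ → ℝ} {K : ℝ≥0}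
    (hf : ∀ x, HasDerivAt f (f' x) x) (hf' : LipschitzWith K f') (x y : ℝ) :
    |f y - f x - f' x * (y - x)| ≤ K / 2 * (y - x) ^ 2 := by
  wlog hxy : x ≤ y generalizing f f' x y
  · have hneg := this (f := fun t => f (-t)) (f' := fun t => -f' (-t))
      (fun t => by simpa [Function.comp_def] using (hf (-t)).comp t (hasDerivAt_neg t))
      ((hf'.comp LipschitzWith.id.neg).neg.weaken (by simp)) (-x) (-y) (by linarith)
    simp only [neg_neg] at hneg
    convert hneg using 2 <;> ring
  have hB : ∀ t, HasDerivAt (fun t => (K : ℝ) / 2 * (t - x) ^ 2) (K * (t - x)) t := fun t =>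
    (((hasDerivAt_id t).sub_const x).pow 2 |>.const_mul ((K : ℝ) / 2)).congr_deriv (by simp; ring)
  have hF : ∀ t, HasDerivAt (fun t => f t - f x - f' x * (t - x)) (f' t - f' x) t := fun t =>
    (((hf t).sub_const (f x)).sub (((hasDerivAt_id t).sub_const x).const_mul (f' x))).congr_deriv
      (by simp)
  refine image_norm_le_of_norm_deriv_right_le_deriv_boundary (a := x) (b := y)
    (continuous_iff_continuousAt.2 fun t => (hF t).continuousAt).continuousOn
    (fun t _ => (hF t).hasDerivWithinAt) (by simp) hB (fun t ht => ?_) ⟨hxy, le_rfl⟩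
  simpa [Real.dist_eq, abs_of_nonneg (sub_nonneg.2 ht.1)] using hf'.dist_le_mul t x

lemma sig_eq_sigmoid : sig = sigmoid := funext fun _ => one_div _

lemma hasDerivAt_sig (x : ℝ) : HasDerivAt sig (sig' x) x := by
  simpa only [sig', sig_eq_sigmoid] using hasDerivAt_sigmoid x

lemma hasDerivAt_sig' (x : ℝ) : HasDerivAt sig' (sig' x * (1 - 2 * sig x)) x :=
  ((hasDerivAt_sig x).mul ((hasDerivAt_sig x).const_sub 1)).congr_deriv (by unfold sig'; ring)

lemma abs_sig'_mul_one_sub_two_mul_sig_le (x : ℝ) : |sig' x * (1 - 2 * sig x)| ≤ 31 / 320 := by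
  have h0 : 0 < sig x := sig_eq_sigmoid ▸ sigmoid_pos x
  have h1 : sig x < 1 := sig_eq_sigmoid ▸ sigmoid_lt_one x
  have hw : 0 ≤ sig' x := mul_nonneg h0.le (by linarith)
  -- for `w = sig' x ∈ [0, 1/4]`, `w²(1 - 4w)` peaks at `w = 1/6`, where it is `1/108 < (31/320)²`
  have hsq : (sig' x * (1 - 2 * sig x)) ^ 2 = sig' x ^ 2 * (1 - 4 * sig' x) := by
    unfold sig'; ring
  refine abs_le_of_sq_le_sq ?_ (by norm_num)
  rw [hsq]
  nlinarith [mul_nonneg hw (sq_nonneg (sig' x - 1 / 6))]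

lemma lipschitzWith_sig' : LipschitzWith (31 / 320) sig' := by
  refine lipschitzOnWith_univ.1 <| convex_univ.lipschitzOnWith_of_nnnorm_hasDerivWithin_le
    (fun x _ => (hasDerivAt_sig' x).hasDerivWithinAt) fun x _ => ?_
  rw [← NNReal.coe_le_coe, coe_nnnorm, Real.norm_eq_abs]
  simpa using abs_sig'_mul_one_sub_two_mul_sig_le x

lemma sig'_eq_inv_two_add_two_mul_cosh (x : ℝ) : sig' x = (2 + 2 * cosh x)⁻¹ := by
  rw [sig', sig_eq_sigmoid, ← sigmoid_neg, sigmoid_def, sigmoid_def, neg_neg, cosh_eq, ← mul_inv,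
    exp_neg]
  field_simp
  ring

lemma le_sig'_of_abs_le_one {x : ℝ} (hx : |x| ≤ 1) : 31 / 160 ≤ sig' x := by
  have hcosh : cosh x ≤ cosh 1 := cosh_le_cosh.2 (by simpa using hx)
  have hcosh_one : cosh 1 < 1.55 := by
    have hinv : exp (-1) < 0.37 := by
      rw [exp_neg, inv_lt_comm₀ (exp_pos 1) (by norm_num)]; linarith [exp_one_gt_d9]
    rw [cosh_eq]; linarith [exp_one_lt_d9]
  rw [sig'_eq_inv_two_add_two_mul_cosh, le_inv_comm₀ (by norm_num) (by positivity)]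
  linarith

lemma abs_sig_sub_div_sig'_sub_le {x y : ℝ} (hx : |x| ≤ 1) :
    |(sig x - sig y) / sig' x - (x - y)| ≤ (x - y) ^ 2 / 4 := by
  have hlow := le_sig'_of_abs_le_one hx
  have hpos : 0 < sig' x := by linarith
  have htaylor :=
    abs_sub_sub_mul_sub_le_of_lipschitzWith_deriv hasDerivAt_sig lipschitzWith_sig' x y
  rw [show (sig x - sig y) / sig' x - (x - y) = -(sig y - sig x - sig' x * (y - x)) / sig' x by
    field_simp; ring, abs_div, abs_neg, abs_of_pos hpos, div_le_iff₀ hpos]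
  calc _ ≤ (31 / 320 : ℝ≥0) / 2 * (y - x) ^ 2 := htaylor
    _ = (x - y) ^ 2 / 4 * (31 / 160) := by push_cast; ring
    _ ≤ (x - y) ^ 2 / 4 * sig' x := by gcongr

section

variable {Y : Type*}

def rewardGap (r : Y → ℝ) (β : ℝ) (θ : Y → ℝ) (a a' : Y) : ℝ := r a - r a' - β * (θ a - θ a')

lemma rewardGap_sub_rewardGap (r : Y → ℝ) (β : ℝ) (θ : Y → ℝ) (a a' c : Y) :
    rewardGap r β θ a c - rewardGap r β θ a' c = rewardGap r β θ a a' := by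
  unfold rewardGap; ring

variable [Fintype Y] [Nonempty Y] {r : Y → ℝ} {β : ℝ}

lemma rewardGap_step (hβ : β ≠ 0) (θ : Y → ℝ) (g : Y → Y → ℝ) (a a' : Y) :
    rewardGap r β (fun b => θ b + 1 / (β * Fintype.card Y) * ∑ c, g b c) a a' =
      -(Fintype.card Y : ℝ)⁻¹ *
        ∑ c, ((g a c - rewardGap r β θ a c) - (g a' c - rewardGap r β θ a' c)) := by
  have hn : (Fintype.card Y : ℝ) ≠ 0 := by positivity
  have hsum : ∑ c, ((g a c - rewardGap r β θ a c) - (g a' c - rewardGap r β θ a' c)) =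
      ∑ c, g a c - ∑ c, g a' c - Fintype.card Y * rewardGap r β θ a a' := by
    simp_rw [sub_sub_sub_comm _ (rewardGap r β θ a _), rewardGap_sub_rewardGap, sum_sub_distrib]
    simp
  rw [hsum]
  unfold rewardGap
  field_simp
  ring

lemma abs_rewardGap_step_le (hβ : β ≠ 0) {θ : Y → ℝ} {g : Y → Y → ℝ} {ε : ℝ}
    (hg : ∀ b c, |g b c - rewardGap r β θ b c| ≤ ε) (a a' : Y) :
    |rewardGap r β (fun b => θ b + 1 / (β * Fintype.card Y) * ∑ c, g b c) a a'| ≤ 2 * ε := by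
  have hn : (0 : ℝ) < Fintype.card Y := by positivity
  rw [rewardGap_step hβ, abs_mul, abs_neg, abs_inv, abs_of_pos hn, inv_mul_le_iff₀ hn]
  calc _ ≤ ∑ c, |(g a c - rewardGap r β θ a c) - (g a' c - rewardGap r β θ a' c)| :=
        abs_sum_le_sum_abs _ _
    _ ≤ ∑ _c : Y, 2 * ε :=
        sum_le_sum fun c _ => (abs_sub _ _).trans (by linarith [hg a c, hg a' c])
    _ = Fintype.card Y * (2 * ε) := by simp

end

/-- **Theorem 3 (Upper bound of DPO-Mix-R).**
Under tabular softmax parametrization with uniform reference policy,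
rewards in `[0,1]`, initialization `θ⁰ = 0`, and the exact DPO-Mix-R
update with learning rate `η = 1/(β²A)`, the reward-gap errors converge
quadratically: `|δ(a,a';θ^T)| ≤ 0.5^(2^T - 1)`. -/
theorem dpo_mix_r_quadratic_convergence
    {Y : Type*} [Fintype Y] [Nonempty Y]
    (A : ℕ) (hA : A = Fintype.card Y)
    (r : Y → ℝ) (hr : ∀ a, 0 ≤ r a ∧ r a ≤ 1)
    (β : ℝ) (hβ : 0 < β)
    (θ : ℕ → Y → ℝ) (hθ0 : θ 0 = 0)
    (hupd : ∀ t a, θ (t + 1) a = θ t a +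
      (1 / (β * A)) * ∑ a' : Y,
        (sig (r a - r a') - sig (β * (θ t a - θ t a'))) / sig' (r a - r a')) :
    ∀ (T : ℕ) (a a' : Y),
      |r a - r a' - β * (θ T a - θ T a')| ≤ (0.5 : ℝ) ^ (2 ^ T - 1) := by
  subst hA
  have hr' : ∀ b c, |r b - r c| ≤ 1 := fun b c =>
    abs_sub_le_of_nonneg_of_le (hr b).1 (hr b).2 (hr c).1 (hr c).2
  intro T
  induction T with
  | zero => simpa [hθ0] using hr'
  | succ T ih =>
    intro a a'
    have hpow : (0.5 : ℝ) ^ (2 ^ (T + 1) - 1) = 2 * (((0.5 : ℝ) ^ (2 ^ T - 1)) ^ 2 / 4) := by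
      have hexp : 2 ^ (T + 1) - 1 = 2 * (2 ^ T - 1) + 1 := by
        have := Nat.one_le_two_pow (n := T); rw [pow_succ]; omega
      rw [hexp, pow_succ, pow_mul']; ring
    rw [hpow, funext (hupd T)]
    refine abs_rewardGap_step_le hβ.ne'
      (fun b c => (abs_sig_sub_div_sig'_sub_le (hr' b c)).trans ?_) a a'
    obtain ⟨hlo, hhi⟩ := abs_le.1 (ih b c)
    linarith [sq_le_sq' hlo hhi]
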